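/- arXiv:2305.01705 — 2 statements merged into one kernel-verified Lean document; each statement's English description precedes it below -/
import Mathlib

section
/- Let p1, p2, p3 ∈ (1,∞) with 1/p1 + 1/p2 + 1/p3 = 2. There exists a constant C > 0 such that for all f ∈ L^{p1,∞}(ℝ^N), g ∈ L^{p2}(ℝ^N), h ∈ L^{p3}(ℝ^N), the function (f∗g)·h is integrable and ‖(f∗g)h‖_{L^1} ≤ C·‖f‖_{L^{p1,∞}}·‖g‖_{L^{p2}}·‖h‖_{L^{p3}}. -/
open MeasureTheory ENNReal Set

/-- Distribution function `λ_f(t) = μ_L({|f| > t})`. -/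
noncomputable def distFn (N : ℕ) (f : EuclideanSpace ℝ (Fin N) → ℝ) (t : ℝ) : ℝ≥0∞ :=
  volume {x | t < |f x|}

/-- Weak `L^p` quasi-norm `sup_{t>0} t · λ_f(t)^{1/p}`. -/
noncomputable def weakNorm (N : ℕ) (f : EuclideanSpace ℝ (Fin N) → ℝ) (p : ℝ) : ℝ≥0∞ :=
  ⨆ t ∈ Ioi (0:ℝ), ENNReal.ofReal t * (distFn N f t) ^ (1 / p)

/-!
Writing `|f|`, `|g|`, `|h|` as integrals of the indicators of their superlevel sets turns
`∫∫ |f (x - y)| |g y| |h x|` into `∫∫∫ J(t, u, v)`, where `J(t, u, v)` is the measure of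
`{(x, y) | t < |f (x - y)|, u < |g y|, v < |h x|}`. By translation invariance `J` is bounded by each
of the pairwise products of the distribution functions `a = λ_f`, `b = λ_g`, `c = λ_h`.

Integrating `min (a b) (a c) (b c)` in `t` with the weak-type bound `a t ≤ ‖f‖^p₁ t^(-p₁)` gives
`‖f‖ · min (b(u) c(v)^σ) (c(v) b(u)^σ)` up to a constant, with `σ = 1 - 1/p₁ = 1/p₂ + 1/p₃ - 1`.
Split the `(u, v)`-quadrant along the curve `‖h‖^p₃ u^p₂ = ‖g‖^p₂ v^p₃`: on each side, bound the
factor raised to the power `σ` by Chebyshev's inequality, integrate out its variable explicitly,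
and recognise what remains as the layer-cake formula `p ∫ λ(s) s^(p-1) ds = ‖·‖_p^p`.
-/

section LayerCake

variable {α : Type*} [MeasurableSpace α] {μ : Measure α}

theorem lintegral_ofReal_mul_eq_setLIntegral_Ioi {F : α → ℝ} {w : α → ℝ≥0∞}
    (hF0 : ∀ a, 0 ≤ F a) (hF : Measurable F) (hw : Measurable w) :
    ∫⁻ a, ENNReal.ofReal (F a) * w a ∂μ = ∫⁻ t in Ioi 0, ∫⁻ a in {a | t < F a}, w a ∂μ := by
  have hdens := lintegral_withDensity_eq_lintegral_mul μ hw hF.ennreal_ofReal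
  simp only [Pi.mul_apply, mul_comm (w _)] at hdens
  rw [← hdens, lintegral_eq_lintegral_meas_lt _ (Filter.Eventually.of_forall hF0) hF.aemeasurable]
  refine setLIntegral_congr_fun measurableSet_Ioi fun t _ => ?_
  exact withDensity_apply _ (measurableSet_lt measurable_const hF)

theorem lintegral_ofReal_mul_ofReal_mul_ofReal {F₁ F₂ F₃ : α → ℝ}
    (hF₁0 : ∀ a, 0 ≤ F₁ a) (hF₂0 : ∀ a, 0 ≤ F₂ a) (hF₃0 : ∀ a, 0 ≤ F₃ a)
    (hF₁ : Measurable F₁) (hF₂ : Measurable F₂) (hF₃ : Measurable F₃) :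
    ∫⁻ a, ENNReal.ofReal (F₁ a) * ENNReal.ofReal (F₂ a) * ENNReal.ofReal (F₃ a) ∂μ =
      ∫⁻ v in Ioi 0, ∫⁻ u in Ioi 0, ∫⁻ t in Ioi 0,
        μ {a | t < F₁ a ∧ u < F₂ a ∧ v < F₃ a} := by
  simp_rw [mul_comm _ (ENNReal.ofReal (F₃ _)), mul_comm (ENNReal.ofReal (F₁ _))]
  rw [lintegral_ofReal_mul_eq_setLIntegral_Ioi hF₃0 hF₃ (by fun_prop)]
  refine setLIntegral_congr_fun measurableSet_Ioi fun v _ => ?_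
  rw [lintegral_ofReal_mul_eq_setLIntegral_Ioi hF₂0 hF₂ hF₁.ennreal_ofReal]
  refine setLIntegral_congr_fun measurableSet_Ioi fun u _ => ?_
  rw [lintegral_eq_lintegral_meas_lt _ (Filter.Eventually.of_forall hF₁0) hF₁.aemeasurable]
  refine setLIntegral_congr_fun measurableSet_Ioi fun t _ => ?_
  rw [Measure.restrict_apply (measurableSet_lt measurable_const hF₁),
    Measure.restrict_apply ((measurableSet_lt measurable_const hF₁).inter
      (measurableSet_lt measurable_const hF₂))]
  congr 1
  ext a
  simp [and_assoc]

end LayerCake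

section Convolution

variable {G : Type*} [MeasurableSpace G] [AddCommGroup G] [MeasurableAdd₂ G] [MeasurableNeg G]
  {μ : Measure G} [SFinite μ]

theorem lintegral_conv_mul_eq {f g h : G → ℝ} (hf : Measurable f) (hg : Measurable g)
    (hh : Measurable h) :
    ∫⁻ x, (∫⁻ y, ENNReal.ofReal |f (x - y)| * ENNReal.ofReal |g y| ∂μ) * ENNReal.ofReal |h x| ∂μ =
      ∫⁻ v in Ioi 0, ∫⁻ u in Ioi 0, ∫⁻ t in Ioi 0,
        μ.prod μ {z | t < |f (z.1 - z.2)| ∧ u < |g z.2| ∧ v < |h z.1|} := by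
  rw [← lintegral_ofReal_mul_ofReal_mul_ofReal (F₁ := fun z : G × G => |f (z.1 - z.2)|)
    (F₂ := fun z => |g z.2|) (F₃ := fun z => |h z.1|) (fun _ => abs_nonneg _)
    (fun _ => abs_nonneg _) (fun _ => abs_nonneg _) (by fun_prop) (by fun_prop) (by fun_prop),
    lintegral_prod _ (by fun_prop)]
  exact lintegral_congr fun x => (lintegral_mul_const' _ _ ofReal_ne_top).symm

variable [μ.IsAddLeftInvariant] [μ.IsNegInvariant]

theorem prod_measure_sub_mem_le_min {A B C : Set G} (hA : MeasurableSet A) (hB : MeasurableSet B)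
    (hC : MeasurableSet C) :
    μ.prod μ {z | z.1 - z.2 ∈ A ∧ z.2 ∈ B ∧ z.1 ∈ C} ≤
      min (μ A * μ B) (min (μ A * μ C) (μ B * μ C)) := by
  have hshear : MeasurePreserving (fun z : G × G => (z.1, z.1 - z.2)) (μ.prod μ) (μ.prod μ) := by
    convert ((MeasurePreserving.id μ).prod (Measure.measurePreserving_neg μ)).comp
      (measurePreserving_prod_sub μ μ) using 1
    ext z <;> simp
  refine le_min ?_ (le_min ?_ ?_)
  · calc μ.prod μ {z | z.1 - z.2 ∈ A ∧ z.2 ∈ B ∧ z.1 ∈ C}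
        ≤ μ.prod μ ((fun z : G × G => (z.1 - z.2, z.2)) ⁻¹' A ×ˢ B) :=
          measure_mono fun z hz => ⟨hz.1, hz.2.1⟩
      _ = μ A * μ B := by
          rw [(measurePreserving_sub_prod μ μ).measure_preimage (hA.prod hB).nullMeasurableSet,
            Measure.prod_prod]
  · calc μ.prod μ {z | z.1 - z.2 ∈ A ∧ z.2 ∈ B ∧ z.1 ∈ C}
        ≤ μ.prod μ ((fun z : G × G => (z.1, z.1 - z.2)) ⁻¹' C ×ˢ A) :=
          measure_mono fun z hz => ⟨hz.2.2, hz.1⟩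
      _ = μ A * μ C := by
          rw [hshear.measure_preimage (hC.prod hA).nullMeasurableSet, Measure.prod_prod, mul_comm]
  · calc μ.prod μ {z | z.1 - z.2 ∈ A ∧ z.2 ∈ B ∧ z.1 ∈ C}
        ≤ μ.prod μ (C ×ˢ B) := measure_mono fun z hz => ⟨hz.2.2, hz.2.1⟩
      _ = μ B * μ C := by rw [Measure.prod_prod, mul_comm]

end Convolution

theorem setLIntegral_Ioi_rpow_of_lt_neg_one {r a : ℝ} (hr : r < -1) (ha : 0 < a) :
    ∫⁻ t in Ioi a, ENNReal.ofReal (t ^ r) = ENNReal.ofReal (-a ^ (r + 1) / (r + 1)) := by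
  rw [← ofReal_integral_eq_lintegral_ofReal (integrableOn_Ioi_rpow_of_lt hr ha)
    ((ae_restrict_iff' measurableSet_Ioi).2 (Filter.Eventually.of_forall
      fun t ht => Real.rpow_nonneg (ha.trans ht).le _)), integral_Ioi_rpow_of_lt hr ha]

theorem setLIntegral_Ioc_rpow_of_neg_one_lt {r a : ℝ} (hr : -1 < r) (ha : 0 ≤ a) :
    ∫⁻ t in Ioc 0 a, ENNReal.ofReal (t ^ r) = ENNReal.ofReal (a ^ (r + 1) / (r + 1)) := by
  rw [← ofReal_integral_eq_lintegral_ofReal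
    (intervalIntegral.intervalIntegrable_rpow' hr (a := 0) (b := a)).1
    ((ae_restrict_iff' measurableSet_Ioc).2 (Filter.Eventually.of_forall
      fun t ht => Real.rpow_nonneg ht.1.le _)),
    ← intervalIntegral.integral_of_le ha, integral_rpow (Or.inl hr),
    Real.zero_rpow (by linarith), sub_zero]

theorem setLIntegral_Ioi_min_rpow_neg_le_add {p W C t₀ : ℝ} (hp : 1 < p) (hW : 0 ≤ W)
    (hC : 0 ≤ C) (ht₀ : 0 < t₀) :
    ∫⁻ t in Ioi 0, min (ENNReal.ofReal C) (ENNReal.ofReal (W ^ p * t ^ (-p))) ≤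
      ENNReal.ofReal (C * t₀ + W ^ p * (t₀ ^ (1 - p) / (p - 1))) := by
  have hp1 : 0 < p - 1 := sub_pos.2 hp
  rw [← Ioc_union_Ioi_eq_Ioi ht₀.le, lintegral_union measurableSet_Ioi (Ioc_disjoint_Ioi le_rfl),
    ENNReal.ofReal_add (by positivity) (by positivity)]
  gcongr
  · calc _ ≤ ∫⁻ _ in Ioc 0 t₀, ENNReal.ofReal C := lintegral_mono fun t => min_le_left _ _
      _ = _ := by rw [setLIntegral_const, Real.volume_Ioc, sub_zero, ← ENNReal.ofReal_mul hC]
  · calc _ ≤ ∫⁻ t in Ioi t₀, ENNReal.ofReal (W ^ p) * ENNReal.ofReal (t ^ (-p)) :=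
          lintegral_mono fun t => (min_le_right _ _).trans (ENNReal.ofReal_mul (by positivity)).le
      _ = _ := by
        rw [lintegral_const_mul _ (by fun_prop),
          setLIntegral_Ioi_rpow_of_lt_neg_one (by linarith) ht₀,
          ← ENNReal.ofReal_mul (by positivity),
          show -p + 1 = 1 - p by ring, neg_div, ← div_neg, neg_sub]

theorem setLIntegral_Ioi_min_rpow_neg_le {p W : ℝ} (hp : 1 < p) (hW : 0 ≤ W) {c : ℝ≥0∞}
    (hc : c ≠ ⊤) :
    ∫⁻ t in Ioi 0, min c (ENNReal.ofReal (W ^ p * t ^ (-p))) ≤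
      ENNReal.ofReal (p / (p - 1) * W) * c ^ (1 - 1 / p) := by
  rcases hW.eq_or_lt with rfl | hW
  · simp [Real.zero_rpow (by linarith : p ≠ 0)]
  rcases eq_or_ne c 0 with rfl | hc0
  · simp
  obtain ⟨C, hC, rfl⟩ : ∃ C : ℝ, 0 < C ∧ c = ENNReal.ofReal C :=
    ⟨c.toReal, toReal_pos hc0 hc, (ofReal_toReal hc).symm⟩
  -- split where the two bounds `C` and `W ^ p * t ^ (-p)` cross
  set t₀ := W * C ^ (-(1 / p)) with ht₀
  refine (setLIntegral_Ioi_min_rpow_neg_le_add (t₀ := t₀) hp hW.le hC.le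
    (by positivity)).trans_eq ?_
  rw [ENNReal.ofReal_rpow_of_pos hC, ← ENNReal.ofReal_mul (by positivity)]
  congr 1
  have hCt₀ : C * t₀ = W * C ^ (1 - 1 / p) := by
    rw [ht₀, sub_eq_add_neg, Real.rpow_add hC, Real.rpow_one]; ring
  have hWt₀ : W ^ p * t₀ ^ (1 - p) = W * C ^ (1 - 1 / p) := by
    rw [ht₀, Real.mul_rpow hW.le (by positivity), ← Real.rpow_mul hC.le, ← mul_assoc,
      ← Real.rpow_add hW, add_sub_cancel, Real.rpow_one]
    congr 2
    field_simp
    ring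
  have hp1 : p - 1 ≠ 0 := by linarith
  rw [hCt₀, ← mul_div_assoc, hWt₀]
  field_simp
  ring

theorem setLIntegral_Ioi_le_of_le_min_mul {J a : ℝ → ℝ≥0∞} {β γ : ℝ≥0∞} {p W : ℝ} (hp : 1 < p)
    (hW : 0 ≤ W) (hβ : β ≠ ⊤) (hγ : γ ≠ ⊤)
    (hJ : ∀ t, J t ≤ min (a t * β) (min (a t * γ) (β * γ)))
    (ha : ∀ t, 0 < t → a t ≤ ENNReal.ofReal (W ^ p * t ^ (-p))) :
    ∫⁻ t in Ioi 0, J t ≤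
      ENNReal.ofReal (p / (p - 1) * W) * min (β * γ ^ (1 - 1 / p)) (γ * β ^ (1 - 1 / p)) := by
  have hfactor : ∀ δ ε : ℝ≥0∞, δ ≠ ⊤ → ε ≠ ⊤ → (∀ t, J t ≤ δ * min ε (a t)) →
      ∫⁻ t in Ioi 0, J t ≤ ENNReal.ofReal (p / (p - 1) * W) * (δ * ε ^ (1 - 1 / p)) := by
    intro δ ε hδ hε hJδ
    calc ∫⁻ t in Ioi 0, J t
        ≤ ∫⁻ t in Ioi 0, δ * min ε (ENNReal.ofReal (W ^ p * t ^ (-p))) :=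
          setLIntegral_mono' measurableSet_Ioi fun t ht =>
            (hJδ t).trans (by gcongr; exact ha t ht)
      _ ≤ δ * (ENNReal.ofReal (p / (p - 1) * W) * ε ^ (1 - 1 / p)) := by
          rw [lintegral_const_mul' _ _ hδ]
          gcongr
          exact setLIntegral_Ioi_min_rpow_neg_le hp hW hε
      _ = _ := by ring
  rw [mul_min]
  refine le_min (hfactor β γ hβ hγ fun t => (hJ t).trans ?_)
    (hfactor γ β hγ hβ fun t => (hJ t).trans ?_)
  · rw [mul_min, mul_comm β (a t)]
    exact le_min ((min_le_right _ _).trans (min_le_right _ _)) (min_le_left _ _)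
  · rw [mul_min, mul_comm γ (a t), mul_comm γ β]
    exact le_min ((min_le_right _ _).trans (min_le_right _ _))
      ((min_le_right _ _).trans (min_le_left _ _))

theorem setLIntegral_Ioi_ite_mul_rpow_le {b : ℝ → ℝ≥0∞} {p q σ G H v : ℝ} (κ : ℝ≥0∞)
    (hp : 0 < p) (hq : 1 < q) (hσ : σ = 1 / p + 1 / q - 1) (hσ0 : 0 ≤ σ) (hG : 0 < G)
    (hH : 0 < H) (hv : 0 < v) (hb : ∀ u, 0 < u → b u ≤ ENNReal.ofReal (G * u ^ (-p))) :
    ∫⁻ u in Ioi 0, (if H * u ^ p ≤ G * v ^ q then κ * b u ^ σ else 0) ≤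
      κ * ENNReal.ofReal (q / (p * (q - 1)) * G ^ (1 / p) * H ^ (1 / q - 1) * v ^ (q - 1)) := by
  have hpσ : 1 - p * σ = p * (q - 1) / q := by
    rw [hσ]; field_simp; ring
  have hpσ0 : 0 < 1 - p * σ := by
    rw [hpσ]; have := sub_pos.2 hq; positivity
  -- the region `H * u ^ p ≤ G * v ^ q` is the interval `u ≤ ψ`
  set ψ := (G * v ^ q / H) ^ p⁻¹ with hψ
  have hψ0 : 0 < ψ := by positivity
  have hψpow : G ^ σ * (ψ ^ (-(p * σ) + 1) / (-(p * σ) + 1)) =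
      q / (p * (q - 1)) * G ^ (1 / p) * H ^ (1 / q - 1) * v ^ (q - 1) := by
    have he : p⁻¹ * (-(p * σ) + 1) = 1 - 1 / q := by
      rw [hσ]; field_simp; ring
    have hG' : G ^ (1 / p) = G ^ σ * G ^ (1 - 1 / q) := by
      rw [← Real.rpow_add hG]; congr 1; rw [hσ]; ring
    rw [hψ, ← Real.rpow_mul (by positivity), he, Real.div_rpow (by positivity) hH.le,
      Real.mul_rpow hG.le (by positivity), ← Real.rpow_mul hv.le,
      show q * (1 - 1 / q) = q - 1 by field_simp, hG', show 1 / q - 1 = -(1 - 1 / q) by ring,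
      Real.rpow_neg hH.le, neg_add_eq_sub, hpσ]
    have := sub_pos.2 hq
    field_simp
  calc ∫⁻ u in Ioi 0, (if H * u ^ p ≤ G * v ^ q then κ * b u ^ σ else 0)
      ≤ ∫⁻ u in Ioi 0, (Iic ψ).indicator
          (fun u => κ * ENNReal.ofReal (G ^ σ * u ^ (-(p * σ)))) u := by
        refine setLIntegral_mono' measurableSet_Ioi fun u (hu : 0 < u) => ?_
        split_ifs with hreg
        · have huψ : u ≤ ψ := by
            rw [hψ, Real.le_rpow_inv_iff_of_pos hu.le (by positivity) hp, le_div_iff₀ hH]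
            linarith
          rw [indicator_of_mem (mem_Iic.2 huψ)]
          gcongr
          calc b u ^ σ ≤ ENNReal.ofReal (G * u ^ (-p)) ^ σ := ENNReal.rpow_le_rpow (hb u hu) hσ0
            _ = ENNReal.ofReal (G ^ σ * u ^ (-(p * σ))) := by
              rw [ENNReal.ofReal_rpow_of_nonneg (by positivity) hσ0,
                Real.mul_rpow hG.le (by positivity), ← Real.rpow_mul hu.le, neg_mul]
        · exact zero_le
    _ = κ * (ENNReal.ofReal (G ^ σ) * ∫⁻ u in Ioc 0 ψ, ENNReal.ofReal (u ^ (-(p * σ)))) := by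
        rw [lintegral_indicator measurableSet_Iic, Measure.restrict_restrict measurableSet_Iic,
          inter_comm, Ioi_inter_Iic, ← lintegral_const_mul _ (by fun_prop),
          ← lintegral_const_mul _ (by fun_prop)]
        refine setLIntegral_congr_fun measurableSet_Ioc fun u hu => ?_
        rw [ENNReal.ofReal_mul (by positivity)]
    _ = _ := by
        rw [setLIntegral_Ioc_rpow_of_neg_one_lt (by linarith) hψ0.le,
          ← ENNReal.ofReal_mul (by positivity), hψpow]

theorem setLIntegral_Ioi_setLIntegral_Ioi_ite_le {b c : ℝ → ℝ≥0∞} {p q σ G H : ℝ} (hp : 0 < p)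
    (hq : 1 < q) (hσ : σ = 1 / p + 1 / q - 1) (hσ0 : 0 ≤ σ) (hG : 0 < G) (hH : 0 < H)
    (hc : Measurable c) (hb : ∀ u, 0 < u → b u ≤ ENNReal.ofReal (G * u ^ (-p)))
    (hcl : ∫⁻ v in Ioi 0, c v * ENNReal.ofReal (v ^ (q - 1)) ≤ ENNReal.ofReal (H / q)) :
    ∫⁻ v in Ioi 0, ∫⁻ u in Ioi 0, (if H * u ^ p ≤ G * v ^ q then c v * b u ^ σ else 0) ≤
      ENNReal.ofReal (G ^ (1 / p) * H ^ (1 / q) / (p * (q - 1))) := by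
  set K := q / (p * (q - 1)) * G ^ (1 / p) * H ^ (1 / q - 1) with hK
  have hK0 : 0 ≤ K := by have := sub_pos.2 hq; positivity
  calc _ ≤ ∫⁻ v in Ioi 0, ENNReal.ofReal K * (c v * ENNReal.ofReal (v ^ (q - 1))) :=
        setLIntegral_mono' measurableSet_Ioi fun v (hv : 0 < v) =>
          (setLIntegral_Ioi_ite_mul_rpow_le (c v) hp hq hσ hσ0 hG hH hv hb).trans_eq (by
            rw [ENNReal.ofReal_mul hK0]; ring)
    _ ≤ ENNReal.ofReal K * ENNReal.ofReal (H / q) := by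
        rw [lintegral_const_mul _ (by fun_prop)]
        gcongr
    _ = _ := by
        have hH' : H ^ (1 / q - 1) * H = H ^ (1 / q) := by
          rw [Real.rpow_sub_one hH.ne']; field_simp
        have := sub_pos.2 hq
        rw [← ENNReal.ofReal_mul hK0, hK, ← hH']
        congr 1
        field_simp

theorem setLIntegral_Ioi_setLIntegral_Ioi_min_le {b c : ℝ → ℝ≥0∞} {p q σ G H : ℝ} (hp : 1 < p)
    (hq : 1 < q) (hσ : σ = 1 / p + 1 / q - 1) (hσ0 : 0 ≤ σ) (hG : 0 < G) (hH : 0 < H)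
    (hbm : Measurable b) (hcm : Measurable c)
    (hb : ∀ u, 0 < u → b u ≤ ENNReal.ofReal (G * u ^ (-p)))
    (hc : ∀ v, 0 < v → c v ≤ ENNReal.ofReal (H * v ^ (-q)))
    (hbl : ∫⁻ u in Ioi 0, b u * ENNReal.ofReal (u ^ (p - 1)) ≤ ENNReal.ofReal (G / p))
    (hcl : ∫⁻ v in Ioi 0, c v * ENNReal.ofReal (v ^ (q - 1)) ≤ ENNReal.ofReal (H / q)) :
    ∫⁻ v in Ioi 0, ∫⁻ u in Ioi 0, min (b u * c v ^ σ) (c v * b u ^ σ) ≤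
      ENNReal.ofReal ((1 / (p * (q - 1)) + 1 / (q * (p - 1))) * G ^ (1 / p) * H ^ (1 / q)) := by
  set A := fun u v => if H * u ^ p ≤ G * v ^ q then c v * b u ^ σ else 0 with hA
  set B := fun u v => if G * v ^ q ≤ H * u ^ p then b u * c v ^ σ else 0 with hB
  have hAm : Measurable fun z : ℝ × ℝ => A z.2 z.1 := by
    refine Measurable.ite (measurableSet_le ?_ ?_) ?_ measurable_const <;> fun_prop
  have hBm : Measurable fun z : ℝ × ℝ => B z.2 z.1 := by
    refine Measurable.ite (measurableSet_le ?_ ?_) ?_ measurable_const <;> fun_prop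
  have hsplit : ∀ u v, min (b u * c v ^ σ) (c v * b u ^ σ) ≤ A u v + B u v := by
    intro u v
    rcases le_total (H * u ^ p) (G * v ^ q) with h | h
    · exact (min_le_right _ _).trans (by simp [hA, h])
    · exact (min_le_left _ _).trans (by simp [hB, h])
  have hAint := setLIntegral_Ioi_setLIntegral_Ioi_ite_le (by linarith) hq hσ hσ0 hG hH hcm hb hcl
  have hBint := setLIntegral_Ioi_setLIntegral_Ioi_ite_le (by linarith) hp (by rw [hσ]; ring)
    hσ0 hH hG hbm hc hbl
  calc _ ≤ ∫⁻ v in Ioi 0, ∫⁻ u in Ioi 0, (A u v + B u v) :=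
        lintegral_mono fun v => lintegral_mono fun u => hsplit u v
    _ = (∫⁻ v in Ioi 0, ∫⁻ u in Ioi 0, A u v) + ∫⁻ u in Ioi 0, ∫⁻ v in Ioi 0, B u v := by
        rw [lintegral_lintegral_swap (hBm.comp measurable_swap).aemeasurable,
          ← lintegral_add_left hAm.lintegral_prod_right']
        exact lintegral_congr fun v => lintegral_add_left (hAm.comp measurable_prodMk_left) _
    _ ≤ _ := add_le_add hAint hBint
    _ = _ := by
        rw [← ENNReal.ofReal_add (by positivity) (by positivity)]
        congr 1
        ring

noncomputable def youngWeakConst (p₁ p₂ p₃ : ℝ) : ℝ :=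
  p₁ / (p₁ - 1) * (1 / (p₂ * (p₃ - 1)) + 1 / (p₃ * (p₂ - 1)))

theorem youngWeakConst_pos {p₁ p₂ p₃ : ℝ} (hp₁ : 1 < p₁) (hp₂ : 1 < p₂) (hp₃ : 1 < p₃) :
    0 < youngWeakConst p₁ p₂ p₃ := by
  have := sub_pos.2 hp₁; have := sub_pos.2 hp₂; have := sub_pos.2 hp₃
  unfold youngWeakConst
  positivity

section TripleIntegral

variable {J : ℝ → ℝ → ℝ → ℝ≥0∞} {a b c : ℝ → ℝ≥0∞} {p₁ p₂ p₃ : ℝ}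

theorem setLIntegral_Ioi_triple_le_of_pos {w ng nh : ℝ} (hp₁ : 1 < p₁) (hp₂ : 1 < p₂)
    (hp₃ : 1 < p₃) (hsum : 1 / p₁ + 1 / p₂ + 1 / p₃ = 2) (hw : 0 ≤ w) (hng : 0 < ng)
    (hnh : 0 < nh) (hbm : Measurable b) (hcm : Measurable c)
    (hJ : ∀ t u v, J t u v ≤ min (a t * b u) (min (a t * c v) (b u * c v)))
    (ha : ∀ t, 0 < t → a t ≤ ENNReal.ofReal (w ^ p₁ * t ^ (-p₁)))
    (hb : ∀ u, 0 < u → b u ≤ ENNReal.ofReal (ng ^ p₂ * u ^ (-p₂)))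
    (hc : ∀ v, 0 < v → c v ≤ ENNReal.ofReal (nh ^ p₃ * v ^ (-p₃)))
    (hbl : ∫⁻ u in Ioi 0, b u * ENNReal.ofReal (u ^ (p₂ - 1)) ≤ ENNReal.ofReal (ng ^ p₂ / p₂))
    (hcl : ∫⁻ v in Ioi 0, c v * ENNReal.ofReal (v ^ (p₃ - 1)) ≤ ENNReal.ofReal (nh ^ p₃ / p₃)) :
    ∫⁻ v in Ioi 0, ∫⁻ u in Ioi 0, ∫⁻ t in Ioi 0, J t u v ≤
      ENNReal.ofReal (youngWeakConst p₁ p₂ p₃ * w * ng * nh) := by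
  have hp₂0 : 0 < p₂ := by linarith
  have hp₃0 : 0 < p₃ := by linarith
  have hσ0 : 0 ≤ 1 - 1 / p₁ := by rw [sub_nonneg, div_le_one (by linarith)]; exact hp₁.le
  calc ∫⁻ v in Ioi 0, ∫⁻ u in Ioi 0, ∫⁻ t in Ioi 0, J t u v
      ≤ ∫⁻ v in Ioi 0, ∫⁻ u in Ioi 0, ENNReal.ofReal (p₁ / (p₁ - 1) * w) *
          min (b u * c v ^ (1 - 1 / p₁)) (c v * b u ^ (1 - 1 / p₁)) :=
        setLIntegral_mono' measurableSet_Ioi fun v (hv : 0 < v) =>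
          setLIntegral_mono' measurableSet_Ioi fun u (hu : 0 < u) =>
            setLIntegral_Ioi_le_of_le_min_mul hp₁ hw
              (ne_top_of_le_ne_top ofReal_ne_top (hb u hu))
              (ne_top_of_le_ne_top ofReal_ne_top (hc v hv)) (fun t => hJ t u v) ha
    _ = ENNReal.ofReal (p₁ / (p₁ - 1) * w) * ∫⁻ v in Ioi 0, ∫⁻ u in Ioi 0,
          min (b u * c v ^ (1 - 1 / p₁)) (c v * b u ^ (1 - 1 / p₁)) := by
        simp_rw [lintegral_const_mul' _ _ ofReal_ne_top]
    _ ≤ ENNReal.ofReal (p₁ / (p₁ - 1) * w) * ENNReal.ofReal ((1 / (p₂ * (p₃ - 1)) +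
          1 / (p₃ * (p₂ - 1))) * (ng ^ p₂) ^ (1 / p₂) * (nh ^ p₃) ^ (1 / p₃)) := by
        gcongr
        exact setLIntegral_Ioi_setLIntegral_Ioi_min_le hp₂ hp₃ (by linarith) hσ0
          (by positivity) (by positivity) hbm hcm hb hc hbl hcl
    _ = _ := by
        rw [← ENNReal.ofReal_mul (by positivity), one_div p₂, one_div p₃,
          Real.rpow_rpow_inv hng.le hp₂0.ne', Real.rpow_rpow_inv hnh.le hp₃0.ne', youngWeakConst]
        congr 1
        ring

theorem setLIntegral_Ioi_triple_eq_zero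
    (hJ : ∀ t u v, J t u v ≤ min (a t * b u) (min (a t * c v) (b u * c v)))
    (hzero : (∀ t, 0 < t → a t = 0) ∨ (∀ u, 0 < u → b u = 0) ∨ (∀ v, 0 < v → c v = 0)) :
    ∫⁻ v in Ioi 0, ∫⁻ u in Ioi 0, ∫⁻ t in Ioi 0, J t u v = 0 := by
  have hJ0 : ∀ t u v, 0 < t → 0 < u → 0 < v → J t u v = 0 := by
    intro t u v ht hu hv
    refine le_antisymm ((hJ t u v).trans ?_) zero_le
    rcases hzero with ha | hb | hc
    · simp [ha t ht]
    · simp [hb u hu]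
    · simp [hc v hv]
  refine le_antisymm ?_ zero_le
  calc _ ≤ ∫⁻ v in Ioi 0, ∫⁻ u in Ioi 0, ∫⁻ t in Ioi 0, (0 : ℝ≥0∞) :=
        setLIntegral_mono' measurableSet_Ioi fun v hv => setLIntegral_mono' measurableSet_Ioi
          fun u hu => setLIntegral_mono' measurableSet_Ioi fun t ht => (hJ0 t u v ht hu hv).le
    _ = 0 := by simp

theorem setLIntegral_Ioi_triple_le {W Ng Nh : ℝ≥0∞} (hp₁ : 1 < p₁) (hp₂ : 1 < p₂)
    (hp₃ : 1 < p₃) (hsum : 1 / p₁ + 1 / p₂ + 1 / p₃ = 2) (hbm : Measurable b)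
    (hcm : Measurable c) (hJ : ∀ t u v, J t u v ≤ min (a t * b u) (min (a t * c v) (b u * c v)))
    (ha : ∀ t, 0 < t → a t ≤ W ^ p₁ * ENNReal.ofReal (t ^ (-p₁)))
    (hb : ∀ u, 0 < u → b u ≤ Ng ^ p₂ * ENNReal.ofReal (u ^ (-p₂)))
    (hc : ∀ v, 0 < v → c v ≤ Nh ^ p₃ * ENNReal.ofReal (v ^ (-p₃)))
    (hbl : ENNReal.ofReal p₂ * ∫⁻ u in Ioi 0, b u * ENNReal.ofReal (u ^ (p₂ - 1)) = Ng ^ p₂)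
    (hcl : ENNReal.ofReal p₃ * ∫⁻ v in Ioi 0, c v * ENNReal.ofReal (v ^ (p₃ - 1)) = Nh ^ p₃) :
    ∫⁻ v in Ioi 0, ∫⁻ u in Ioi 0, ∫⁻ t in Ioi 0, J t u v ≤
      ENNReal.ofReal (youngWeakConst p₁ p₂ p₃) * W * Ng * Nh := by
  have hC := youngWeakConst_pos hp₁ hp₂ hp₃
  have hvanish : ∀ {N : ℝ≥0∞} {d : ℝ → ℝ≥0∞} {p : ℝ}, 1 < p → N = 0 →
      (∀ s, 0 < s → d s ≤ N ^ p * ENNReal.ofReal (s ^ (-p))) → ∀ s, 0 < s → d s = 0 := by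
    rintro N d p hp rfl hd s hs
    simpa [ENNReal.zero_rpow_of_pos (by linarith : 0 < p)] using hd s hs
  by_cases hdeg : W = 0 ∨ Ng = 0 ∨ Nh = 0
  · rw [setLIntegral_Ioi_triple_eq_zero hJ ?_]
    · exact zero_le
    rcases hdeg with hW | hNg | hNh
    · exact Or.inl (hvanish hp₁ hW ha)
    · exact Or.inr (Or.inl (hvanish hp₂ hNg hb))
    · exact Or.inr (Or.inr (hvanish hp₃ hNh hc))
  simp only [not_or] at hdeg
  obtain ⟨hW0, hNg0, hNh0⟩ := hdeg
  by_cases htop : W = ⊤ ∨ Ng = ⊤ ∨ Nh = ⊤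
  · have : ENNReal.ofReal (youngWeakConst p₁ p₂ p₃) * W * Ng * Nh = ⊤ := by
      rcases htop with rfl | rfl | rfl <;> simp [*]
    exact this ▸ le_top
  simp only [not_or] at htop
  obtain ⟨hWt, hNgt, hNht⟩ := htop
  obtain ⟨w, hw, rfl⟩ : ∃ w, 0 < w ∧ W = ENNReal.ofReal w :=
    ⟨W.toReal, toReal_pos hW0 hWt, (ofReal_toReal hWt).symm⟩
  obtain ⟨ng, hng, rfl⟩ : ∃ ng, 0 < ng ∧ Ng = ENNReal.ofReal ng :=
    ⟨Ng.toReal, toReal_pos hNg0 hNgt, (ofReal_toReal hNgt).symm⟩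
  obtain ⟨nh, hnh, rfl⟩ : ∃ nh, 0 < nh ∧ Nh = ENNReal.ofReal nh :=
    ⟨Nh.toReal, toReal_pos hNh0 hNht, (ofReal_toReal hNht).symm⟩
  have hpow : ∀ {n p x : ℝ}, 0 < n → 0 ≤ x →
      ENNReal.ofReal n ^ p * ENNReal.ofReal x = ENNReal.ofReal (n ^ p * x) := fun hn hx => by
    rw [ENNReal.ofReal_rpow_of_pos hn, ← ENNReal.ofReal_mul (by positivity)]
  have hlayer : ∀ {n p : ℝ} {I : ℝ≥0∞}, 0 < n → 0 < p →
      ENNReal.ofReal p * I = ENNReal.ofReal n ^ p → I ≤ ENNReal.ofReal (n ^ p / p) := by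
    intro n p I hn hp hI
    rw [ENNReal.ofReal_div_of_pos hp, ← ENNReal.ofReal_rpow_of_pos hn, ← hI, mul_comm,
      ENNReal.mul_div_cancel_right (by simpa using hp) ofReal_ne_top]
  rw [← ENNReal.ofReal_mul hC.le, ← ENNReal.ofReal_mul (by positivity),
    ← ENNReal.ofReal_mul (by positivity)]
  exact setLIntegral_Ioi_triple_le_of_pos hp₁ hp₂ hp₃ hsum hw.le hng hnh hbm hcm hJ
    (fun t ht => (ha t ht).trans_eq (hpow hw (by positivity)))
    (fun u hu => (hb u hu).trans_eq (hpow hng (by positivity)))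
    (fun v hv => (hc v hv).trans_eq (hpow hnh (by positivity)))
    (hlayer hng (by linarith) hbl) (hlayer hnh (by linarith) hcl)

end TripleIntegral

section DistributionFunction

variable {N : ℕ}

theorem distFn_antitone (f : EuclideanSpace ℝ (Fin N) → ℝ) : Antitone (distFn N f) :=
  fun _ _ hst => measure_mono fun _ hx => hst.trans_lt hx

theorem distFn_le_weakNorm_rpow_mul (f : EuclideanSpace ℝ (Fin N) → ℝ) {p t : ℝ} (hp : 0 < p)
    (ht : 0 < t) : distFn N f t ≤ weakNorm N f p ^ p * ENNReal.ofReal (t ^ (-p)) := by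
  have hsup : ENNReal.ofReal t * distFn N f t ^ (1 / p) ≤ weakNorm N f p :=
    le_biSup (fun t => ENNReal.ofReal t * distFn N f t ^ (1 / p)) (mem_Ioi.2 ht)
  have htp : ENNReal.ofReal (t ^ p) * ENNReal.ofReal (t ^ (-p)) = 1 := by
    rw [← ENNReal.ofReal_mul (by positivity), ← Real.rpow_add ht, add_neg_cancel,
      Real.rpow_zero, ENNReal.ofReal_one]
  calc distFn N f t = ENNReal.ofReal (t ^ p) * distFn N f t * ENNReal.ofReal (t ^ (-p)) := by
        rw [mul_comm (ENNReal.ofReal _), mul_assoc, htp, mul_one]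
    _ = (ENNReal.ofReal t * distFn N f t ^ (1 / p)) ^ p * ENNReal.ofReal (t ^ (-p)) := by
        rw [ENNReal.mul_rpow_of_nonneg _ _ hp.le, ← ENNReal.rpow_mul, one_div_mul_cancel hp.ne',
          ENNReal.rpow_one, ENNReal.ofReal_rpow_of_pos ht]
    _ ≤ weakNorm N f p ^ p * ENNReal.ofReal (t ^ (-p)) := by gcongr

theorem distFn_le_eLpNorm_rpow_mul {g : EuclideanSpace ℝ (Fin N) → ℝ} (hg : Measurable g)
    {p u : ℝ} (hp : 0 < p) (hu : 0 < u) :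
    distFn N g u ≤ eLpNorm g (ENNReal.ofReal p) volume ^ p * ENNReal.ofReal (u ^ (-p)) := by
  calc distFn N g u ≤ volume {x | ENNReal.ofReal u ≤ ‖g x‖ₑ} :=
        measure_mono fun x (hx : u < |g x|) => by
          rw [mem_ofPred, Real.enorm_eq_ofReal_abs]; exact ENNReal.ofReal_le_ofReal hx.le
    _ ≤ (ENNReal.ofReal u)⁻¹ ^ (ENNReal.ofReal p).toReal *
          eLpNorm g (ENNReal.ofReal p) volume ^ (ENNReal.ofReal p).toReal :=
        meas_ge_le_mul_pow_eLpNorm_enorm volume (by simpa using hp) ofReal_ne_top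
          hg.aestronglyMeasurable (by simpa using hu) (by simp)
    _ = _ := by
        rw [toReal_ofReal hp.le, mul_comm, ← ENNReal.ofReal_inv_of_pos hu,
          ENNReal.ofReal_rpow_of_pos (by positivity), Real.inv_rpow hu.le, Real.rpow_neg hu.le]

theorem ofReal_mul_setLIntegral_distFn_eq {g : EuclideanSpace ℝ (Fin N) → ℝ} (hg : Measurable g)
    {p : ℝ} (hp : 0 < p) :
    ENNReal.ofReal p * ∫⁻ u in Ioi 0, distFn N g u * ENNReal.ofReal (u ^ (p - 1)) =
      eLpNorm g (ENNReal.ofReal p) volume ^ p := by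
  unfold distFn
  rw [← lintegral_rpow_eq_lintegral_meas_lt_mul volume
      (Filter.Eventually.of_forall fun x => abs_nonneg (g x)) hg.abs.aemeasurable hp,
    eLpNorm_eq_lintegral_rpow_enorm_toReal (by simpa using hp) ofReal_ne_top, toReal_ofReal hp.le,
    ← ENNReal.rpow_mul, one_div_mul_cancel hp.ne', ENNReal.rpow_one]
  refine lintegral_congr fun x => ?_
  rw [Real.enorm_eq_ofReal_abs, ENNReal.ofReal_rpow_of_nonneg (abs_nonneg _) hp.le]

end DistributionFunction

theorem stmt_10 (N : ℕ) (p1 p2 p3 : ℝ) (h1 : 1 < p1) (h2 : 1 < p2) (h3 : 1 < p3)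
    (hsum : 1 / p1 + 1 / p2 + 1 / p3 = 2) :
    ∃ C : ℝ, 0 < C ∧ ∀ f g h : EuclideanSpace ℝ (Fin N) → ℝ,
      Measurable f → Measurable g → Measurable h →
      ∫⁻ x, (∫⁻ y, ENNReal.ofReal |f (x - y)| * ENNReal.ofReal |g y|) * ENNReal.ofReal |h x| ≤
        ENNReal.ofReal C * weakNorm N f p1 * eLpNorm g (ENNReal.ofReal p2) volume *
          eLpNorm h (ENNReal.ofReal p3) volume := by
  refine ⟨youngWeakConst p1 p2 p3, youngWeakConst_pos h1 h2 h3, fun f g h hf hg hh => ?_⟩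
  have hsuperlevel : ∀ {φ : EuclideanSpace ℝ (Fin N) → ℝ} (t : ℝ), Measurable φ →
      MeasurableSet {x | t < |φ x|} := fun _ hφ => measurableSet_lt measurable_const hφ.abs
  rw [lintegral_conv_mul_eq hf hg hh]
  exact setLIntegral_Ioi_triple_le h1 h2 h3 hsum (distFn_antitone g).measurable
    (distFn_antitone h).measurable
    (fun t u v => prod_measure_sub_mem_le_min (hsuperlevel t hf) (hsuperlevel u hg)
      (hsuperlevel v hh))
    (fun t ht => distFn_le_weakNorm_rpow_mul f (by linarith) ht)
    (fun u hu => distFn_le_eLpNorm_rpow_mul hg (by linarith) hu)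
    (fun v hv => distFn_le_eLpNorm_rpow_mul hh (by linarith) hv)
    (ofReal_mul_setLIntegral_distFn_eq hg (by linarith))
    (ofReal_mul_setLIntegral_distFn_eq hh (by linarith))
end

section
/- Let (f_n) be a sequence of measurable functions on ℝ^N, let η_R(x) = 1 − φ(x/R) where φ ∈ C_c^∞(ℝ^N;[0,1]) equals 1 on B_1(0) and 0 outside B_2(0), and suppose f_n dx → σ vaguely (as measures, with f_n ≥ 0) and that m_∞ := lim_{R→∞} limsup_{n→∞} ∫ f_n η_R dx exists. Then limsup_{n→∞} ∫_{ℝ^N} f_n dx = σ(ℝ^N) + m_∞. -/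
open MeasureTheory Filter Set

private lemma limsup_tendsto_add' {a b : ℕ → ℝ} {A : ℝ} (ha : Tendsto a atTop (nhds A))
    (hb1 : IsBoundedUnder (· ≤ ·) atTop b) (hb2 : IsBoundedUnder (· ≥ ·) atTop b) :
    limsup (fun n => a n + b n) atTop = A + limsup b atTop := by
  have ha1 : IsBoundedUnder (· ≤ ·) atTop a := ha.isBoundedUnder_le
  have ha2 : IsBoundedUnder (· ≥ ·) atTop a := ha.isBoundedUnder_ge
  have hA : limsup a atTop = A := ha.limsup_eq
  apply le_antisymm
  · have := limsup_add_le (u := a) (v := b) ha2 ha1 hb2.isCoboundedUnder_le hb1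
    simpa [Pi.add_def, hA] using this
  · have hna : Tendsto (fun n => -a n) atTop (nhds (-A)) := ha.neg
    have hab1 : IsBoundedUnder (· ≤ ·) atTop (fun n => a n + b n) :=
      isBoundedUnder_le_add ha1 hb1
    have hab2 : IsBoundedUnder (· ≥ ·) atTop (fun n => a n + b n) :=
      isBoundedUnder_ge_add ha2 hb2
    have h1 : limsup b atTop = limsup (fun n => (a n + b n) + (-a n)) atTop := by
      congr 1; funext n; ring
    have h2 := limsup_add_le (u := fun n => a n + b n) (v := fun n => -a n)
      hab2 hab1 hna.isBoundedUnder_ge.isCoboundedUnder_le hna.isBoundedUnder_le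
    rw [Pi.add_def] at h2
    have h3 : limsup (fun n => -a n) atTop = -A := hna.limsup_eq
    have := h1 ▸ h2
    rw [h3] at this
    linarith

theorem stmt_15 (N : ℕ) (f : ℕ → EuclideanSpace ℝ (Fin N) → ℝ)
    (hfm : ∀ n, Measurable (f n)) (hfpos : ∀ n x, 0 ≤ f n x)
    (hfint : ∀ n, Integrable (f n)) (hbdd : ∃ C : ℝ, ∀ n, (∫ x, f n x) ≤ C)
    (σ : Measure (EuclideanSpace ℝ (Fin N))) [IsFiniteMeasure σ]
    (hvague : ∀ ψ : EuclideanSpace ℝ (Fin N) → ℝ, Continuous ψ →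
      Tendsto ψ (cocompact (EuclideanSpace ℝ (Fin N))) (nhds 0) →
      Tendsto (fun n => ∫ x, ψ x * f n x) atTop (nhds (∫ x, ψ x ∂σ)))
    (φ : EuclideanSpace ℝ (Fin N) → ℝ) (hφ : ContDiff ℝ (⊤ : ℕ∞) φ)
    (hφ01 : ∀ x, φ x ∈ Icc (0:ℝ) 1)
    (hφ1 : ∀ x ∈ Metric.ball (0 : EuclideanSpace ℝ (Fin N)) 1, φ x = 1)
    (hφ0 : ∀ x ∉ Metric.ball (0 : EuclideanSpace ℝ (Fin N)) 2, φ x = 0)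
    (minf : ℝ)
    (hm : Tendsto (fun R : ℝ => limsup (fun n => ∫ x, f n x * (1 - φ (R⁻¹ • x))) atTop)
      atTop (nhds minf)) :
    limsup (fun n => ∫ x, f n x) atTop = (σ univ).toReal + minf := by
  obtain ⟨C, hC⟩ := hbdd
  have hφcont : Continuous φ := hφ.continuous
  have hψcont : ∀ R : ℝ, Continuous (fun x : EuclideanSpace ℝ (Fin N) => φ (R⁻¹ • x)) :=
    fun R => hφcont.comp (continuous_const_smul _)
  have hint1 : ∀ (R : ℝ) (n : ℕ), Integrable (fun x : EuclideanSpace ℝ (Fin N) => φ (R⁻¹ • x) * f n x) := by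
    intro R n
    refine (hfint n).bdd_mul (c := 1) ((hψcont R).aestronglyMeasurable) (ae_of_all _ fun x => ?_)
    rw [Real.norm_eq_abs, abs_le]
    exact ⟨by linarith [(hφ01 (R⁻¹ • x)).1], (hφ01 (R⁻¹ • x)).2⟩
  have hint2 : ∀ (R : ℝ) (n : ℕ), Integrable (fun x : EuclideanSpace ℝ (Fin N) => f n x * (1 - φ (R⁻¹ • x))) := by
    intro R n
    exact ((hfint n).sub (hint1 R n)).congr (Eventually.of_forall fun x => by simp only [Pi.sub_apply]; ring)
  have hb_nonneg : ∀ (R : ℝ) (n : ℕ), 0 ≤ ∫ x, f n x * (1 - φ (R⁻¹ • x)) := by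
    intro R n
    exact integral_nonneg fun x =>
      mul_nonneg (hfpos n x) (by linarith [(hφ01 (R⁻¹ • x)).2])
  have hb_le : ∀ (R : ℝ) (n : ℕ), (∫ x, f n x * (1 - φ (R⁻¹ • x))) ≤ C := by
    intro R n
    refine le_trans (integral_mono (hint2 R n) (hfint n) fun x => ?_) (hC n)
    have h1 := (hφ01 (R⁻¹ • x)).1
    have h2 := hfpos n x
    nlinarith
  have key : ∀ R : ℝ, 0 < R →
      limsup (fun n => ∫ x, f n x) atTop
        = (∫ x, φ (R⁻¹ • x) ∂σ) + limsup (fun n => ∫ x, f n x * (1 - φ (R⁻¹ • x))) atTop := by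
    intro R hR
    have htends : Tendsto (fun n => ∫ x, φ (R⁻¹ • x) * f n x) atTop
        (nhds (∫ x, φ (R⁻¹ • x) ∂σ)) := by
      refine hvague _ (hψcont R) ?_
      have hcpt : IsCompact (Metric.closedBall (0:EuclideanSpace ℝ (Fin N)) (2*R)) :=
        isCompact_closedBall _ _
      refine Tendsto.congr' ?_ (tendsto_const_nhds (x := (0:ℝ)))
      filter_upwards [hcpt.compl_mem_cocompact] with x hx
      symm
      apply hφ0
      simp only [Metric.mem_ball, dist_zero_right, not_lt]
      have hx' : 2*R < ‖x‖ := by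
        simpa [Metric.closedBall, dist_zero_right, not_le] using hx
      rw [norm_smul, norm_inv, Real.norm_eq_abs, abs_of_pos hR]
      rw [le_inv_mul_iff₀ hR]
      linarith
    have hsplit : (fun n => ∫ x, f n x)
        = fun n => (∫ x, φ (R⁻¹ • x) * f n x) + ∫ x, f n x * (1 - φ (R⁻¹ • x)) := by
      funext n
      rw [← integral_add (hint1 R n) (hint2 R n)]
      congr 1; funext x; ring
    rw [hsplit]
    exact limsup_tendsto_add' htends (isBoundedUnder_of ⟨C, fun n => hb_le R n⟩)
      (isBoundedUnder_of ⟨0, fun n => hb_nonneg R n⟩)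
  have hσ : Tendsto (fun R : ℝ => ∫ x, φ (R⁻¹ • x) ∂σ) atTop (nhds ((σ univ).toReal)) := by
    have h1 : (∫ _ : EuclideanSpace ℝ (Fin N), (1:ℝ) ∂σ) = (σ univ).toReal := by simp [Measure.real]
    rw [← h1]
    refine tendsto_integral_filter_of_dominated_convergence (bound := fun _ => (1:ℝ))
      (Eventually.of_forall fun R => (hψcont R).aestronglyMeasurable)
      (Eventually.of_forall fun R => ae_of_all _ fun x => ?_)
      (integrable_const 1) (ae_of_all _ fun x => ?_)
    · rw [Real.norm_eq_abs, abs_le]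
      exact ⟨by linarith [(hφ01 (R⁻¹ • x)).1], (hφ01 (R⁻¹ • x)).2⟩
    · refine Tendsto.congr' ?_ (tendsto_const_nhds (x := (1:ℝ)))
      filter_upwards [eventually_gt_atTop (max ‖x‖ 1)] with R hR
      have hR1 : (1:ℝ) < R := lt_of_le_of_lt (le_max_right _ _) hR
      have hRx : ‖x‖ < R := lt_of_le_of_lt (le_max_left _ _) hR
      have hR0 : (0:ℝ) < R := by linarith
      symm
      apply hφ1
      simp only [Metric.mem_ball, dist_zero_right]
      rw [norm_smul, norm_inv, Real.norm_eq_abs, abs_of_pos hR0]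
      rw [inv_mul_lt_iff₀ hR0]
      linarith
  have hT : Tendsto (fun R : ℝ => (∫ x, φ (R⁻¹ • x) ∂σ)
      + limsup (fun n => ∫ x, f n x * (1 - φ (R⁻¹ • x))) atTop) atTop
      (nhds ((σ univ).toReal + minf)) := hσ.add hm
  have hT' : Tendsto (fun R : ℝ => (∫ x, φ (R⁻¹ • x) ∂σ)
      + limsup (fun n => ∫ x, f n x * (1 - φ (R⁻¹ • x))) atTop) atTop
      (nhds (limsup (fun n => ∫ x, f n x) atTop)) := by
    refine Tendsto.congr' ?_ tendsto_const_nhds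
    filter_upwards [eventually_gt_atTop (0:ℝ)] with R hR
    exact key R hR
  exact tendsto_nhds_unique hT' hT
end
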